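/- arXiv:2106.06878 — 3 statements merged into one kernel-verified Lean document; each statement's English description precedes it below -/
import Mathlib

section
/- Suppose for each n we have a nonadaptive group testing design M_n ∈ {0,1}^{T_n × n} together with a decoder f_n : {0,1}^{T_n} → {0,1}^n, and let k_0 : ℕ → ℕ satisfy k_0(n) → ∞ and k_0(n)/n → 0 as n → ∞. If for every sequence of integers k_n with k_n ≤ n and k_n / k_0(n) → 1 the probability that f_n(y) ≠ x tends to 0 as n → ∞ when x is drawn from the combinatorial prior with k_n defectives (y being the vector of OR test outcomes of M_n applied to x), then the probability that f_n(y) ≠ x also tends to 0 as n → ∞ when x is drawn from the i.i.d. prior with defective probability p_n = k_0(n)/n. -/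
open Filter Finset

/-- Result vector of a nonadaptive test design `M` applied to defective vector `x`:
test `t` is positive iff some item in the test is defective. -/
def testResult {T n : ℕ} (M : Fin T → Fin n → Bool) (x : Fin n → Bool) : Fin T → Bool :=
  fun t => decide (∃ i, M t i = true ∧ x i = true)

/-- Error probability of design `M` with decoder `f` under the combinatorial prior,
where the defective vector is the indicator of a uniformly random `k`-subset of the items. -/
noncomputable def combErrProb {T n : ℕ} (M : Fin T → Fin n → Bool)
    (f : (Fin T → Bool) → (Fin n → Bool)) (k : ℕ) : ℝ :=
  (∑ S ∈ Finset.powersetCard k (Finset.univ : Finset (Fin n)),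
      (if f (testResult M (fun i => decide (i ∈ S))) ≠ (fun i => decide (i ∈ S))
        then (1 : ℝ) else 0))
    / (n.choose k : ℝ)

/-- Error probability of design `M` with decoder `f` under the i.i.d. prior, where each
item is independently defective with probability `p`. -/
noncomputable def iidErrProb {T n : ℕ} (M : Fin T → Fin n → Bool)
    (f : (Fin T → Bool) → (Fin n → Bool)) (p : ℝ) : ℝ :=
  ∑ x : Fin n → Bool,
    (∏ i, (if x i then p else 1 - p)) *
      (if f (testResult M x) ≠ x then (1 : ℝ) else 0)

/-! ### Auxiliary lemmas -/

lemma bern_eval (n k : ℕ) (p : ℝ) :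
    (bernsteinPolynomial ℝ n k).eval p = (n.choose k : ℝ) * p ^ k * (1 - p) ^ (n - k) := by
  simp [bernsteinPolynomial]

lemma bern_sum_one (n : ℕ) (p : ℝ) :
    ∑ k ∈ range (n + 1), (n.choose k : ℝ) * p ^ k * (1 - p) ^ (n - k) = 1 := by
  have := congrArg (Polynomial.eval p) (bernsteinPolynomial.sum ℝ n)
  simpa [Polynomial.eval_finset_sum, bern_eval] using this

lemma bern_var (n : ℕ) (p : ℝ) :
    ∑ k ∈ range (n + 1),
        ((n:ℝ) * p - k) ^ 2 * ((n.choose k : ℝ) * p ^ k * (1 - p) ^ (n - k))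
      = (n:ℝ) * p * (1 - p) := by
  have := congrArg (Polynomial.eval p) (bernsteinPolynomial.variance (R := ℝ) n)
  simpa [Polynomial.eval_finset_sum, bern_eval, nsmul_eq_mul] using this

/-- Indicator bool functions correspond to finsets. -/
def boolFunEquiv (n : ℕ) : Finset (Fin n) ≃ (Fin n → Bool) where
  toFun S := fun i => decide (i ∈ S)
  invFun x := univ.filter (fun i => x i = true)
  left_inv S := by ext i; simp
  right_inv x := by funext i; by_cases h : x i <;> simp [h]

lemma weight_eq (n : ℕ) (p : ℝ) (S : Finset (Fin n)) :
    (∏ i, (if (decide (i ∈ S) : Bool) then p else 1 - p))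
      = p ^ S.card * (1 - p) ^ (n - S.card) := by
  simp only [decide_eq_true_eq]
  rw [← Finset.prod_filter_mul_prod_filter_not univ (· ∈ S)]
  have h1 : univ.filter (· ∈ S) = S := by ext i; simp
  have h2 : univ.filter (fun i => ¬ i ∈ S) = Sᶜ := by ext i; simp
  rw [h1, h2]
  rw [Finset.prod_congr rfl (fun i hi => if_pos hi),
      Finset.prod_congr rfl (fun i (hi : i ∈ Sᶜ) => if_neg (Finset.mem_compl.mp hi)),
      Finset.prod_const, Finset.prod_const, Finset.card_compl]
  simp

lemma iid_decomp {T n : ℕ} (M : Fin T → Fin n → Bool)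
    (f : (Fin T → Bool) → (Fin n → Bool)) (p : ℝ) :
    iidErrProb M f p
      = ∑ k ∈ range (n + 1),
          (n.choose k : ℝ) * p ^ k * (1 - p) ^ (n - k) * combErrProb M f k := by
  have step1 : iidErrProb M f p
      = ∑ S : Finset (Fin n), p ^ S.card * (1 - p) ^ (n - S.card) *
          (if f (testResult M (fun i => decide (i ∈ S))) ≠ (fun i => decide (i ∈ S))
            then (1 : ℝ) else 0) := by
    rw [iidErrProb]
    refine (Fintype.sum_equiv (boolFunEquiv n) _ _ fun S => ?_).symm
    simp only [boolFunEquiv, Equiv.coe_fn_mk]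
    rw [← weight_eq]
    rfl
  rw [step1, ← Finset.powerset_univ, Finset.powerset_card_disjiUnion]
  erw [Finset.sum_disjiUnion]
  rw [card_univ, Fintype.card_fin]
  refine Finset.sum_congr rfl fun k hk => ?_
  have hk' : k ≤ n := Nat.lt_succ_iff.mp (Finset.mem_range.mp hk)
  have hch : (0:ℝ) < (n.choose k : ℝ) := by exact_mod_cast Nat.choose_pos hk'
  rw [combErrProb]
  rw [Finset.sum_congr rfl (fun S hS => by
    rw [(Finset.mem_powersetCard.mp hS).2])]
  rw [← Finset.mul_sum]
  field_simp

lemma combErrProb_nonneg {T n : ℕ} (M : Fin T → Fin n → Bool)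
    (f : (Fin T → Bool) → (Fin n → Bool)) (k : ℕ) : 0 ≤ combErrProb M f k := by
  apply div_nonneg _ (by positivity)
  exact Finset.sum_nonneg fun S _ => by split <;> norm_num

lemma combErrProb_le_one {T n : ℕ} (M : Fin T → Fin n → Bool)
    (f : (Fin T → Bool) → (Fin n → Bool)) {k : ℕ} (hk : k ≤ n) :
    combErrProb M f k ≤ 1 := by
  have hch : (0:ℝ) < (n.choose k : ℝ) := by exact_mod_cast Nat.choose_pos hk
  rw [combErrProb, div_le_one hch]
  calc (∑ S ∈ Finset.powersetCard k (Finset.univ : Finset (Fin n)),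
      (if f (testResult M (fun i => decide (i ∈ S))) ≠ (fun i => decide (i ∈ S))
        then (1 : ℝ) else 0))
      ≤ ∑ S ∈ Finset.powersetCard k (Finset.univ : Finset (Fin n)), 1 :=
        Finset.sum_le_sum fun S _ => by split <;> norm_num
    _ = (n.choose k : ℝ) := by simp

lemma iid_nonneg {T n : ℕ} (M : Fin T → Fin n → Bool)
    (f : (Fin T → Bool) → (Fin n → Bool)) {p : ℝ} (hp0 : 0 ≤ p) (hp1 : p ≤ 1) :
    0 ≤ iidErrProb M f p := by
  apply Finset.sum_nonneg; intro x _
  apply mul_nonneg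
  · apply Finset.prod_nonneg; intro i _; split <;> linarith
  · split <;> norm_num

lemma key_bound {T n : ℕ} (M : Fin T → Fin n → Bool)
    (f : (Fin T → Bool) → (Fin n → Bool)) (k0 r K : ℕ)
    (hn : 1 ≤ n) (hk1 : 1 ≤ k0) (hkn : k0 ≤ n)
    (hKn : K ≤ n) (hKw : |(K:ℝ) - (k0:ℝ)| * (r:ℝ) ≤ (k0:ℝ))
    (hmax : ∀ k : ℕ, k ≤ n → |(k:ℝ) - (k0:ℝ)| * (r:ℝ) ≤ (k0:ℝ) →
        combErrProb M f k ≤ combErrProb M f K) :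
    iidErrProb M f ((k0:ℝ)/n) ≤ (r:ℝ)^2 / k0 + combErrProb M f K := by
  classical
  set p : ℝ := (k0:ℝ)/n with hp
  have hn0 : (0:ℝ) < n := by exact_mod_cast hn
  have hk0R : (0:ℝ) < k0 := by exact_mod_cast hk1
  have hp0 : 0 ≤ p := by positivity
  have hp1 : p ≤ 1 := by rw [hp]; rw [div_le_one hn0]; exact_mod_cast hkn
  have hnp : (n:ℝ) * p = k0 := by rw [hp]; field_simp
  set b : ℕ → ℝ := fun k => (n.choose k : ℝ) * p ^ k * (1 - p) ^ (n - k) with hb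
  have hb0 : ∀ k, 0 ≤ b k := fun k => by
    have h1p : (0:ℝ) ≤ 1 - p := by linarith
    positivity
  set P : ℕ → Prop := fun k : ℕ => |(k:ℝ) - (k0:ℝ)| * (r:ℝ) ≤ (k0:ℝ) with hP
  rw [iid_decomp]
  rw [← Finset.sum_filter_add_sum_filter_not (range (n+1)) P
    (fun k => b k * combErrProb M f k)]
  have part1 : ∑ k ∈ (range (n+1)).filter P, b k * combErrProb M f k
      ≤ combErrProb M f K := by
    calc ∑ k ∈ (range (n+1)).filter P, b k * combErrProb M f k
        ≤ ∑ k ∈ (range (n+1)).filter P, b k * combErrProb M f K := by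
          refine Finset.sum_le_sum fun k hk => ?_
          obtain ⟨hkr, hkP⟩ := Finset.mem_filter.mp hk
          exact mul_le_mul_of_nonneg_left
            (hmax k (Nat.lt_succ_iff.mp (Finset.mem_range.mp hkr)) hkP) (hb0 k)
      _ = (∑ k ∈ (range (n+1)).filter P, b k) * combErrProb M f K := by
          rw [Finset.sum_mul]
      _ ≤ 1 * combErrProb M f K := by
          apply mul_le_mul_of_nonneg_right _ (combErrProb_nonneg M f K)
          calc ∑ k ∈ (range (n+1)).filter P, b k
              ≤ ∑ k ∈ range (n+1), b k :=
                Finset.sum_le_sum_of_subset_of_nonneg (Finset.filter_subset _ _)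
                  (fun k _ _ => hb0 k)
            _ = 1 := bern_sum_one n p
      _ = combErrProb M f K := one_mul _
  have part2 : ∑ k ∈ (range (n+1)).filter (fun k => ¬ P k), b k * combErrProb M f k
      ≤ (r:ℝ)^2 / k0 := by
    have step : ∀ k ∈ (range (n+1)).filter (fun k => ¬ P k),
        b k * combErrProb M f k ≤ ((k:ℝ) - k0)^2 * (r:ℝ)^2 / k0^2 * b k := by
      intro k hk
      obtain ⟨hkr, hkP⟩ := Finset.mem_filter.mp hk
      have hkn' : k ≤ n := Nat.lt_succ_iff.mp (Finset.mem_range.mp hkr)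
      have h1 : (k0:ℝ) < |(k:ℝ) - k0| * r := by
        simpa [hP] using lt_of_not_ge hkP
      have h2 : (k0:ℝ)^2 < ((k:ℝ) - k0)^2 * (r:ℝ)^2 := by
        calc (k0:ℝ)^2 < (|(k:ℝ) - k0| * r)^2 := by
              apply pow_lt_pow_left₀ h1 (le_of_lt hk0R) (by norm_num)
          _ = ((k:ℝ) - k0)^2 * (r:ℝ)^2 := by rw [mul_pow, sq_abs]
      have h3 : (1:ℝ) ≤ ((k:ℝ) - k0)^2 * (r:ℝ)^2 / k0^2 := by
        rw [le_div_iff₀ (by positivity)]; linarith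
      calc b k * combErrProb M f k ≤ b k * 1 :=
            mul_le_mul_of_nonneg_left (combErrProb_le_one M f hkn') (hb0 k)
        _ = b k := mul_one _
        _ ≤ ((k:ℝ) - k0)^2 * (r:ℝ)^2 / k0^2 * b k := le_mul_of_one_le_left (hb0 k) h3
    calc ∑ k ∈ (range (n+1)).filter (fun k => ¬ P k), b k * combErrProb M f k
        ≤ ∑ k ∈ (range (n+1)).filter (fun k => ¬ P k),
            ((k:ℝ) - k0)^2 * (r:ℝ)^2 / k0^2 * b k := Finset.sum_le_sum step
      _ = (r:ℝ)^2 / k0^2 * ∑ k ∈ (range (n+1)).filter (fun k => ¬ P k),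
            ((k:ℝ) - k0)^2 * b k := by
          rw [Finset.mul_sum]; exact Finset.sum_congr rfl fun k _ => by ring
      _ ≤ (r:ℝ)^2 / k0^2 * ∑ k ∈ range (n+1), ((k:ℝ) - k0)^2 * b k := by
          apply mul_le_mul_of_nonneg_left _ (by positivity)
          apply Finset.sum_le_sum_of_subset_of_nonneg (Finset.filter_subset _ _)
          intro k _ _; exact mul_nonneg (sq_nonneg _) (hb0 k)
      _ = (r:ℝ)^2 / k0^2 * ((n:ℝ) * p * (1 - p)) := by
          congr 1
          rw [← bern_var n p]
          refine Finset.sum_congr rfl fun k _ => ?_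
          rw [hnp]
          simp only [hb]
          ring_nf
      _ ≤ (r:ℝ)^2 / k0^2 * k0 := by
          apply mul_le_mul_of_nonneg_left _ (by positivity)
          rw [hnp]
          nlinarith
      _ = (r:ℝ)^2 / k0 := by field_simp
  linarith

lemma nat_sqrt_atTop : Tendsto Nat.sqrt atTop atTop := by
  apply tendsto_atTop_atTop.mpr
  intro b
  exact ⟨b * b, fun a ha => Nat.le_sqrt.mpr ha⟩

/-- If a sequence of designs and decoders has error probability tending to `0` under the
combinatorial prior with `k n = k0 n · (1 + o(1))` defectives (for every such sequence `k`),
where `k0 n → ∞` and `k0 n / n → 0`, then the error probability also tends to `0` under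
the i.i.d. prior with defective probability `p n = k0 n / n`. -/
theorem iid_error_tendsto_zero_of_comb_error_tendsto_zero
    (T : ℕ → ℕ) (M : ∀ n, Fin (T n) → Fin n → Bool)
    (f : ∀ n, (Fin (T n) → Bool) → (Fin n → Bool))
    (k0 : ℕ → ℕ)
    (hk0_top : Tendsto k0 atTop atTop)
    (hk0_small : Tendsto (fun n => (k0 n : ℝ) / n) atTop (nhds 0))
    (hcomb : ∀ k : ℕ → ℕ, (∀ n, k n ≤ n) →
        Tendsto (fun n => (k n : ℝ) / (k0 n : ℝ)) atTop (nhds 1) →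
        Tendsto (fun n => combErrProb (M n) (f n) (k n)) atTop (nhds 0)) :
    Tendsto (fun n => iidErrProb (M n) (f n) ((k0 n : ℝ) / n)) atTop (nhds 0) := by
  classical
  set r : ℕ → ℕ := fun n => Nat.sqrt (Nat.sqrt (k0 n)) with hr
  set W : ℕ → Finset ℕ := fun n =>
    (Finset.range (n+1)).filter
      (fun k : ℕ => |(k:ℝ) - (k0 n:ℝ)| * (r n:ℝ) ≤ (k0 n:ℝ)) with hW
  have hKdef : ∀ n, ∃ K : ℕ, K ≤ n ∧ ((W n).Nonempty →
      (K ∈ W n ∧ ∀ k ∈ W n, combErrProb (M n) (f n) k ≤ combErrProb (M n) (f n) K)) := by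
    intro n
    by_cases h : (W n).Nonempty
    · obtain ⟨Kn, hKm, hKmax⟩ := Finset.exists_max_image (W n) (combErrProb (M n) (f n)) h
      have hKn : Kn ≤ n :=
        Nat.lt_succ_iff.mp (Finset.mem_range.mp (Finset.mem_filter.mp hKm).1)
      exact ⟨Kn, hKn, fun _ => ⟨hKm, hKmax⟩⟩
    · exact ⟨0, Nat.zero_le _, fun h' => absurd h' h⟩
  choose K hKle hKprop using hKdef
  -- eventual facts
  have hrtop : Tendsto r atTop atTop := (nat_sqrt_atTop.comp nat_sqrt_atTop).comp hk0_top
  have hev_n : ∀ᶠ n in atTop, 1 ≤ n := eventually_ge_atTop 1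
  have hev_k1 : ∀ᶠ n in atTop, 1 ≤ k0 n := hk0_top.eventually_ge_atTop 1
  have hev_r1 : ∀ᶠ n in atTop, 1 ≤ r n := hrtop.eventually_ge_atTop 1
  have hev_kn : ∀ᶠ n in atTop, k0 n ≤ n := by
    have hlt : ∀ᶠ n in atTop, (k0 n : ℝ) / n < 1 :=
      hk0_small.eventually_lt_const one_pos
    filter_upwards [hlt, hev_n] with n h1 h2
    by_contra hcon
    push_neg at hcon
    have hn0 : (0:ℝ) < n := by exact_mod_cast h2
    have : (1:ℝ) < (k0 n : ℝ) / n := by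
      rw [lt_div_iff₀ hn0]
      have : (n:ℝ) + 1 ≤ (k0 n : ℝ) := by exact_mod_cast hcon
      linarith
    linarith
  have hev_Wne : ∀ᶠ n in atTop, (W n).Nonempty := by
    filter_upwards [hev_kn] with n hkn
    refine ⟨k0 n, ?_⟩
    rw [hW]
    simp only [Finset.mem_filter, Finset.mem_range]
    constructor
    · omega
    · simp
  -- ratio K/k0 → 1
  have hratio : Tendsto (fun n => (K n : ℝ) / (k0 n : ℝ)) atTop (nhds 1) := by
    rw [← tendsto_sub_nhds_zero_iff]
    have hg : Tendsto (fun n => 1 / (r n : ℝ)) atTop (nhds 0) :=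
      tendsto_one_div_atTop_nhds_zero_nat.comp hrtop
    refine squeeze_zero_norm' ?_ hg
    · filter_upwards [hev_k1, hev_r1, hev_Wne] with n h1 h2 hne
      have hK := (hKprop n hne).1
      rw [hW] at hK
      obtain ⟨-, hKw⟩ := Finset.mem_filter.mp hK
      have hk0R : (0:ℝ) < k0 n := by exact_mod_cast h1
      have hrR : (0:ℝ) < r n := by exact_mod_cast h2
      rw [Real.norm_eq_abs]
      have : |(K n : ℝ) / (k0 n : ℝ) - 1| = |(K n : ℝ) - k0 n| / k0 n := by
        rw [show (K n : ℝ) / (k0 n : ℝ) - 1 = ((K n : ℝ) - k0 n) / k0 n by field_simp]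
        rw [abs_div, abs_of_pos hk0R]
      rw [this, div_le_div_iff₀ hk0R hrR]
      linarith [hKw]
  have hE0 : Tendsto (fun n => combErrProb (M n) (f n) (K n)) atTop (nhds 0) :=
    hcomb K hKle hratio
  -- tail tendsto
  have htail : Tendsto (fun n => ((r n : ℝ))^2 / (k0 n : ℝ)) atTop (nhds 0) := by
    apply squeeze_zero' (g := fun n => 1 / (Nat.sqrt (k0 n) : ℝ))
    · filter_upwards with n; positivity
    · filter_upwards [hev_k1] with n h1
      set s := Nat.sqrt (k0 n) with hs
      have hs1 : 1 ≤ s := by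
        rw [hs]; exact Nat.one_le_iff_ne_zero.mpr (by
          intro h; rw [Nat.sqrt_eq_zero] at h; omega)
      have hsR : (0:ℝ) < s := by exact_mod_cast hs1
      have hr2 : ((r n : ℝ))^2 ≤ (s:ℝ) := by
        have h := Nat.sqrt_le' s
        have hrs : r n = Nat.sqrt s := rfl
        rw [hrs]; exact_mod_cast h
      have hks : ((s:ℝ)) * s ≤ (k0 n : ℝ) := by
        have h := Nat.sqrt_le' (k0 n)
        rw [pow_two] at h
        exact_mod_cast h
      have hk0R : (0:ℝ) < k0 n := by exact_mod_cast h1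
      calc ((r n : ℝ))^2 / (k0 n : ℝ) ≤ (s:ℝ) / ((s:ℝ) * s) := by
            apply div_le_div₀ (le_of_lt hsR) hr2 (by positivity) hks
        _ = 1 / (s:ℝ) := by field_simp
    · have : Tendsto (fun m : ℕ => 1 / (m : ℝ)) atTop (nhds 0) :=
        tendsto_one_div_atTop_nhds_zero_nat
      exact this.comp (nat_sqrt_atTop.comp hk0_top)
  -- final squeeze
  apply squeeze_zero'
    (g := fun n => ((r n : ℝ))^2 / (k0 n : ℝ) + combErrProb (M n) (f n) (K n))
  · filter_upwards [hev_n, hev_kn] with n h1 h2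
    have hn0 : (0:ℝ) < n := by exact_mod_cast h1
    apply iid_nonneg
    · positivity
    · rw [div_le_one hn0]; exact_mod_cast h2
  · filter_upwards [hev_n, hev_k1, hev_kn, hev_Wne] with n h1 h2 h3 hne
    obtain ⟨hKm, hKmax⟩ := hKprop n hne
    rw [hW] at hKm
    obtain ⟨hKr, hKw⟩ := Finset.mem_filter.mp hKm
    apply key_bound (M n) (f n) (k0 n) (r n) (K n) h1 h2 h3 (hKle n) hKw
    intro k hk hkw
    apply hKmax
    rw [hW]
    exact Finset.mem_filter.mpr ⟨Finset.mem_range.mpr (Nat.lt_succ_of_le hk), hkw⟩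
  · simpa using htail.add hE0
end

section
/- Let M ∈ {0,1}^{T×n} be a fixed test matrix and let x ∈ {0,1}^n have i.i.d. entries which are 1 with probability p, where 0 < p ≤ 1/2. Call item i totally disguised (with respect to x) if every test containing i also contains some other item j ≠ i with x_j = 1, and let D(x) be the number of totally disguised items. Then for any decoder f : {0,1}^T → {0,1}^n, the success probability satisfies Pr[f(y) = x] ≤ E[(1−p)^{D(x)}], where y_t = ⋁_{i : M_{t,i}=1} x_i. In particular Pr[f(y) = x] ≤ E[exp(−p·D(x))]. -/
set_option linter.unusedSectionVars false
set_option linter.unnecessarySeqFocus false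
set_option maxHeartbeats 1000000

open Finset

/-- Item `i` is totally disguised (w.r.t. defective vector `x`): every test containing `i`
also contains some other defective item. -/
def TotallyDisguised {T n : ℕ} (M : Fin T → Fin n → Bool) (x : Fin n → Bool) (i : Fin n) :
    Prop :=
  ∀ t, M t i = true → ∃ j, j ≠ i ∧ M t j = true ∧ x j = true

/-- `D(x)`: the number of totally disguised items. -/
noncomputable def disguisedCount {T n : ℕ} (M : Fin T → Fin n → Bool) (x : Fin n → Bool) :
    ℕ :=
  Nat.card {i : Fin n // TotallyDisguised M x i}

namespace GTAux
open scoped Classical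
variable {ι : Type*} [Fintype ι] [DecidableEq ι]

def Cov (F : Finset (Finset ι)) (x : ι → Bool) : Prop := ∀ g ∈ F, ∃ i ∈ g, x i = true

noncomputable def bns (q : ℝ) (x : ι → Bool) (F : Finset (Finset ι)) : ℝ :=
  if Cov F x then q else 1

noncomputable def Wt (p q : ℝ) (V : Finset ι) (H : Finset (Finset ι))
    (K : Multiset (Finset (Finset ι))) (x : ι → Bool) : ℝ :=
  (if Cov H x ∧ (∀ i, i ∉ V → x i = false) then 1 else 0) *
    ((∏ i ∈ V, (if x i = true then p else q)) * (K.map (bns q x)).prod)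

noncomputable def Ssum (p q : ℝ) (V : Finset ι) (H : Finset (Finset ι))
    (K : Multiset (Finset (Finset ι))) : ℝ :=
  ∑ x : ι → Bool, Wt p q V H K x

lemma cov_mono {H H' : Finset (Finset ι)} (h : H' ⊆ H) {x} (hc : Cov H x) : Cov H' x :=
  fun g hg => hc g (h hg)

lemma cov_image_erase {n : ι} {x : ι → Bool} (hx : x n = false) (H : Finset (Finset ι)) :
    Cov (H.image (fun e => e.erase n)) x ↔ Cov H x := by
  constructor
  · intro h e he
    obtain ⟨j, hj, hxj⟩ := h (e.erase n) (mem_image_of_mem _ he)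
    exact ⟨j, (mem_erase.mp hj).2, hxj⟩
  · intro h g hg
    obtain ⟨e, he, rfl⟩ := mem_image.mp hg
    obtain ⟨j, hj, hxj⟩ := h e he
    have hjn : j ≠ n := by rintro rfl; rw [hx] at hxj; exact absurd hxj (by simp)
    exact ⟨j, mem_erase.mpr ⟨hjn, hj⟩, hxj⟩

lemma cov_update_true {n : ι} (x : ι → Bool) (H : Finset (Finset ι)) :
    Cov H (Function.update x n true) ↔ Cov (H.filter (fun e => n ∉ e)) x := by
  constructor
  · intro h e he
    obtain ⟨he', hne⟩ := mem_filter.mp he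
    obtain ⟨j, hj, hxj⟩ := h e he'
    have hjn : j ≠ n := fun h' => hne (h' ▸ hj)
    rw [Function.update_of_ne hjn] at hxj
    exact ⟨j, hj, hxj⟩
  · intro h e he
    by_cases hn : n ∈ e
    · exact ⟨n, hn, Function.update_self n true x⟩
    · obtain ⟨j, hj, hxj⟩ := h e (mem_filter.mpr ⟨he, hn⟩)
      have hjn : j ≠ n := fun h' => hn (h' ▸ hj)
      exact ⟨j, hj, by rw [Function.update_of_ne hjn]; exact hxj⟩

-- pointwise branch 0
lemma wt_branch0 (p q : ℝ) {V : Finset ι} {n : ι} (hn : n ∈ V) (H : Finset (Finset ι))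
    (K : Multiset (Finset (Finset ι))) {x : ι → Bool} (hx : x n = false) :
    Wt p q V H K x
      = q * Wt p q (V.erase n) (H.image (fun e => e.erase n))
          (K.map (fun F => F.image (fun g => g.erase n))) x := by
  unfold Wt
  have hind : (Cov H x ∧ ∀ i, i ∉ V → x i = false)
      ↔ (Cov (H.image (fun e => e.erase n)) x ∧ ∀ i, i ∉ V.erase n → x i = false) := by
    rw [cov_image_erase hx]
    constructor
    · rintro ⟨h1, h2⟩
      refine ⟨h1, fun i hi => ?_⟩
      by_cases hin : i = n
      · subst hin; exact hx
      · exact h2 i (fun hiV => hi (mem_erase.mpr ⟨hin, hiV⟩))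
    · rintro ⟨h1, h2⟩
      exact ⟨h1, fun i hi => h2 i (fun hiV => hi (mem_of_mem_erase hiV))⟩
  have hprod : (∏ i ∈ V, (if x i = true then p else q))
      = q * ∏ i ∈ V.erase n, (if x i = true then p else q) := by
    rw [← Finset.mul_prod_erase V _ hn, hx]
    simp
  have hbns : (K.map (bns q x)).prod
      = ((K.map (fun F => F.image (fun g => g.erase n))).map (bns q x)).prod := by
    rw [Multiset.map_map]
    apply congrArg
    apply Multiset.map_congr rfl
    intro F _
    simp only [Function.comp_apply, bns]
    rw [cov_image_erase hx]
  simp only [hind, hprod, hbns]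
  ring

-- pointwise branch 1
lemma wt_branch1 (p q : ℝ) {V : Finset ι} {n : ι} (hn : n ∈ V) (H : Finset (Finset ι))
    (K : Multiset (Finset (Finset ι))) {x : ι → Bool} (hx : x n = false) :
    Wt p q V H K (Function.update x n true)
      = p * Wt p q (V.erase n) (H.filter (fun e => n ∉ e))
          (K.map (fun F => F.filter (fun g => n ∉ g))) x := by
  unfold Wt
  have hind : (Cov H (Function.update x n true) ∧ ∀ i, i ∉ V → Function.update x n true i = false)
      ↔ (Cov (H.filter (fun e => n ∉ e)) x ∧ ∀ i, i ∉ V.erase n → x i = false) := by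
    rw [cov_update_true]
    constructor
    · rintro ⟨h1, h2⟩
      refine ⟨h1, fun i hi => ?_⟩
      by_cases hin : i = n
      · subst hin; exact hx
      · have := h2 i (fun hiV => hi (mem_erase.mpr ⟨hin, hiV⟩))
        rwa [Function.update_of_ne hin] at this
    · rintro ⟨h1, h2⟩
      refine ⟨h1, fun i hi => ?_⟩
      have hin : i ≠ n := by rintro rfl; exact hi hn
      rw [Function.update_of_ne hin]
      exact h2 i (fun hiV => hi (mem_of_mem_erase hiV))
  have hprod : (∏ i ∈ V, (if Function.update x n true i = true then p else q))
      = p * ∏ i ∈ V.erase n, (if x i = true then p else q) := by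
    rw [← Finset.mul_prod_erase V _ hn, Function.update_self]
    simp only [if_true]
    congr 1
    apply Finset.prod_congr rfl
    intro i hi
    rw [Function.update_of_ne (mem_erase.mp hi).1]
  have hbns : (K.map (bns q (Function.update x n true))).prod
      = ((K.map (fun F => F.filter (fun g => n ∉ g))).map (bns q x)).prod := by
    rw [Multiset.map_map]
    apply congrArg
    apply Multiset.map_congr rfl
    intro F _
    simp only [Function.comp_apply, bns]
    rw [cov_update_true]
  simp only [hind, hprod, hbns]
  ring

lemma wt_zero_of_true (p q : ℝ) {V : Finset ι} {n : ι} (hn : n ∉ V) (H : Finset (Finset ι))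
    (K : Multiset (Finset (Finset ι))) {x : ι → Bool} (hx : x n = true) :
    Wt p q V H K x = 0 := by
  unfold Wt
  rw [if_neg, zero_mul]
  rintro ⟨-, h2⟩
  rw [h2 n hn] at hx
  exact absurd hx (by simp)

end GTAux

namespace GTAux
variable {ι : Type*} [Fintype ι] [DecidableEq ι]
open scoped Classical

lemma sum_split (n : ι) (F : (ι → Bool) → ℝ) :
    ∑ x : ι → Bool, F x
      = ∑ x : ι → Bool, (if x n = false then F x + F (Function.update x n true) else 0) := by
  rw [← Finset.sum_filter, Finset.sum_add_distrib]
  have h2 : ∑ x ∈ Finset.univ.filter (fun x : ι → Bool => x n = false),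
      F (Function.update x n true)
      = ∑ x ∈ Finset.univ.filter (fun x : ι → Bool => ¬ (x n = false)), F x := by
    apply Finset.sum_nbij' (i := fun x => Function.update x n true)
      (j := fun x => Function.update x n false)
    · intro a ha
      simp only [mem_filter, mem_univ, true_and] at ha ⊢
      simp [Function.update_self]
    · intro a ha
      simp [Function.update_self]
    · intro a ha
      simp only [mem_filter, mem_univ, true_and] at ha
      funext j
      by_cases hj : j = n
      · subst hj; simp [Function.update_self, ha]
      · simp [Function.update_of_ne hj]
    · intro a ha
      simp only [mem_filter, mem_univ, true_and] at ha
      funext j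
      by_cases hj : j = n
      · subst hj; simp only [Function.update_self]
        simpa using ha
      · simp [Function.update_of_ne hj]
    · intro a ha; rfl
  rw [h2, Finset.sum_filter_add_sum_filter_not]

lemma ssum_rec (p q : ℝ) {V : Finset ι} {n : ι} (hn : n ∈ V) (H : Finset (Finset ι))
    (K : Multiset (Finset (Finset ι))) :
    Ssum p q V H K
      = q * Ssum p q (V.erase n) (H.image (fun e => e.erase n))
            (K.map (fun F => F.image (fun g => g.erase n)))
        + p * Ssum p q (V.erase n) (H.filter (fun e => n ∉ e))
            (K.map (fun F => F.filter (fun g => n ∉ g))) := by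
  unfold Ssum
  rw [sum_split n]
  rw [Finset.mul_sum, Finset.mul_sum, ← Finset.sum_add_distrib]
  apply Finset.sum_congr rfl
  intro x _
  by_cases hx : x n = false
  · rw [if_pos hx, wt_branch0 p q hn H K hx, wt_branch1 p q hn H K hx]
  · have hx' : x n = true := by revert hx; cases x n <;> simp
    rw [if_neg hx,
      wt_zero_of_true p q (Finset.notMem_erase n V) _ _ hx',
      wt_zero_of_true p q (Finset.notMem_erase n V) _ _ hx']
    ring

end GTAux

namespace GTAux
variable {ι : Type*} [Fintype ι] [DecidableEq ι]
open scoped Classical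

def En (i : ι) (H : Finset (Finset ι)) : Finset (Finset ι) :=
  (H.filter (fun e => i ∈ e)).image (fun e => e.erase i)

noncomputable def DK (V : Finset ι) (H : Finset (Finset ι)) (K : Multiset (Finset (Finset ι))) :
    Multiset (Finset (Finset ι)) :=
  (V.val.map (fun i => En i H)) + K

def Good (V : Finset ι) (F : Finset (Finset ι)) : Prop := ∀ g ∈ F, (g ∩ V).Nonempty

noncomputable def cc (V : Finset ι) (K : Multiset (Finset (Finset ι))) : ℕ :=
  (K.filter (Good V)).card

lemma En_image_erase {i n : ι} (hne : i ≠ n) (H : Finset (Finset ι)) :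
    (En i H).image (fun g => g.erase n) = En i (H.image (fun e => e.erase n)) := by
  ext g
  simp only [En, mem_image, mem_filter]
  constructor
  · rintro ⟨g', ⟨e, ⟨heH, hie⟩, rfl⟩, rfl⟩
    exact ⟨e.erase n, ⟨⟨e, heH, rfl⟩, mem_erase.mpr ⟨hne, hie⟩⟩, (Finset.erase_right_comm)⟩
  · rintro ⟨e', ⟨⟨e, heH, rfl⟩, hie⟩, rfl⟩
    exact ⟨e.erase i, ⟨e, ⟨heH, (mem_erase.mp hie).2⟩, rfl⟩, Finset.erase_right_comm⟩

lemma En_filter {i n : ι} (hne : i ≠ n) (H : Finset (Finset ι)) :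
    (En i H).filter (fun g => n ∉ g) = En i (H.filter (fun e => n ∉ e)) := by
  ext g
  simp only [En, mem_image, mem_filter]
  constructor
  · rintro ⟨⟨e, ⟨heH, hie⟩, rfl⟩, hng⟩
    have hne' : n ∉ e := fun hn => hng (mem_erase.mpr ⟨(Ne.symm hne), hn⟩)
    exact ⟨e, ⟨⟨heH, hne'⟩, hie⟩, rfl⟩
  · rintro ⟨e, ⟨⟨heH, hnn⟩, hie⟩, rfl⟩
    exact ⟨⟨e, ⟨heH, hie⟩, rfl⟩, fun hn => hnn (mem_of_mem_erase hn)⟩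

lemma En_self_filter (n : ι) (H : Finset (Finset ι)) :
    (En n H).filter (fun g => n ∉ g) = En n H := by
  apply Finset.filter_true_of_mem
  intro g hg
  simp only [En, mem_image, mem_filter] at hg
  obtain ⟨e, -, rfl⟩ := hg
  exact Finset.notMem_erase n e

lemma dk_map0 {V : Finset ι} {n : ι} (hn : n ∈ V) (H : Finset (Finset ι))
    (K : Multiset (Finset (Finset ι))) :
    (DK V H K).map (fun F => F.image (fun g => g.erase n))
      = DK (V.erase n) (H.image (fun e => e.erase n))
          (((En n H).image (fun g => g.erase n)) ::ₘ K.map (fun F => F.image (fun g => g.erase n))) := by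
  unfold DK
  rw [Multiset.map_add, Multiset.map_map]
  have hv : V.val = n ::ₘ (V.erase n).val := by
    rw [Finset.erase_val]
    exact (Multiset.cons_erase (by simpa using hn)).symm
  rw [hv, Multiset.map_cons]
  have hcong : (V.erase n).val.map ((fun F => F.image (fun g => g.erase n)) ∘ fun i => En i H)
      = (V.erase n).val.map (fun i => En i (H.image (fun e => e.erase n))) := by
    apply Multiset.map_congr rfl
    intro i hi
    have hin : i ≠ n := (Finset.mem_erase.mp (Finset.mem_def.mpr hi)).1
    exact En_image_erase hin H
  rw [hcong]
  rw [Multiset.add_cons, Multiset.cons_add]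
  rfl

lemma dk_map1 {V : Finset ι} {n : ι} (hn : n ∈ V) (H : Finset (Finset ι))
    (K : Multiset (Finset (Finset ι))) :
    (DK V H K).map (fun F => F.filter (fun g => n ∉ g))
      = DK (V.erase n) (H.filter (fun e => n ∉ e))
          ((En n H) ::ₘ K.map (fun F => F.filter (fun g => n ∉ g))) := by
  unfold DK
  rw [Multiset.map_add, Multiset.map_map]
  have hv : V.val = n ::ₘ (V.erase n).val := by
    rw [Finset.erase_val]
    exact (Multiset.cons_erase (by simpa using hn)).symm
  rw [hv, Multiset.map_cons]
  have hcong : (V.erase n).val.map ((fun F => F.filter (fun g => n ∉ g)) ∘ fun i => En i H)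
      = (V.erase n).val.map (fun i => En i (H.filter (fun e => n ∉ e))) := by
    apply Multiset.map_congr rfl
    intro i hi
    have hin : i ≠ n := (Finset.mem_erase.mp (Finset.mem_def.mpr hi)).1
    exact En_filter hin H
  rw [hcong]
  rw [Multiset.add_cons]
  simp only [Function.comp_apply, En_self_filter n H]
  rw [Multiset.cons_add]

lemma good_of_good_image {V : Finset ι} {n : ι} {F : Finset (Finset ι)}
    (h : Good (V.erase n) (F.image (fun g => g.erase n))) : Good V F := by
  intro g hg
  obtain ⟨j, hj⟩ := h (g.erase n) (mem_image_of_mem _ hg)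
  rw [mem_inter] at hj
  exact ⟨j, mem_inter.mpr ⟨mem_of_mem_erase hj.1, mem_of_mem_erase hj.2⟩⟩

lemma good_of_good_filter {V : Finset ι} {n : ι} (hn : n ∈ V) {F : Finset (Finset ι)}
    (h : Good (V.erase n) (F.filter (fun g => n ∉ g))) : Good V F := by
  intro g hg
  by_cases hng : n ∈ g
  · exact ⟨n, mem_inter.mpr ⟨hng, hn⟩⟩
  · obtain ⟨j, hj⟩ := h g (mem_filter.mpr ⟨hg, hng⟩)
    rw [mem_inter] at hj
    exact ⟨j, mem_inter.mpr ⟨hj.1, mem_of_mem_erase hj.2⟩⟩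

lemma cc_map0_le (V : Finset ι) (n : ι) (K : Multiset (Finset (Finset ι))) :
    cc (V.erase n) (K.map (fun F => F.image (fun g => g.erase n))) ≤ cc V K := by
  unfold cc
  rw [Multiset.filter_map]
  rw [Multiset.card_map]
  apply Multiset.card_le_card
  apply Multiset.monotone_filter_right
  intro F hF
  exact good_of_good_image hF

lemma cc_map1_le {V : Finset ι} {n : ι} (hn : n ∈ V) (K : Multiset (Finset (Finset ι))) :
    cc (V.erase n) (K.map (fun F => F.filter (fun g => n ∉ g))) ≤ cc V K := by
  unfold cc
  rw [Multiset.filter_map, Multiset.card_map]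
  apply Multiset.card_le_card
  apply Multiset.monotone_filter_right
  intro F hF
  exact good_of_good_filter hn hF

lemma cc_cons_le (V : Finset ι) (F : Finset (Finset ι)) (K : Multiset (Finset (Finset ι))) :
    cc V (F ::ₘ K) ≤ cc V K + 1 := by
  unfold cc
  rw [Multiset.filter_cons, Multiset.card_add]
  by_cases h : Good V F <;> simp [h] <;> omega

lemma cc_cons_of_neg {V : Finset ι} {F : Finset (Finset ι)} (h : ¬ Good V F)
    (K : Multiset (Finset (Finset ι))) : cc V (F ::ₘ K) = cc V K := by
  unfold cc
  rw [Multiset.filter_cons_of_neg _ h]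

end GTAux

namespace GTAux
variable {ι : Type*} [Fintype ι] [DecidableEq ι]
open scoped Classical

lemma bns_prod (q : ℝ) (x : ι → Bool) (K : Multiset (Finset (Finset ι))) :
    (K.map (bns q x)).prod = q ^ (K.filter (fun F => Cov F x)).card := by
  induction K using Multiset.induction with
  | empty => simp
  | cons a s ih =>
      rw [Multiset.map_cons, Multiset.prod_cons, ih, Multiset.filter_cons]
      by_cases h : Cov a x
      · rw [if_pos h]
        simp [bns, h, pow_succ]
        ring
      · rw [if_neg h]
        simp [bns, h]

lemma wt_nonneg {p q : ℝ} (hp : 0 ≤ p) (hq : 0 ≤ q) (V : Finset ι) (H : Finset (Finset ι))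
    (K : Multiset (Finset (Finset ι))) (x : ι → Bool) : 0 ≤ Wt p q V H K x := by
  unfold Wt
  apply mul_nonneg
  · positivity
  apply mul_nonneg
  · apply Finset.prod_nonneg
    intro i _
    by_cases h : x i = true <;> simp [h, hp, hq]
  · apply Multiset.prod_nonneg
    intro a ha
    obtain ⟨F, -, rfl⟩ := Multiset.mem_map.mp ha
    unfold bns
    by_cases h : Cov F x <;> simp [h, hq]

lemma ssum_nonneg {p q : ℝ} (hp : 0 ≤ p) (hq : 0 ≤ q) (V : Finset ι) (H : Finset (Finset ι))
    (K : Multiset (Finset (Finset ι))) : 0 ≤ Ssum p q V H K :=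
  Finset.sum_nonneg fun x _ => wt_nonneg hp hq V H K x

end GTAux

namespace GTAux
variable {ι : Type*} [Fintype ι] [DecidableEq ι]
open scoped Classical

lemma pow_le_pow_cc {q : ℝ} (hq0 : 0 ≤ q) (hq1 : q ≤ 1) {a b : ℕ} (h : a ≤ b) :
    q ^ b ≤ q ^ a :=
  pow_le_pow_of_le_one hq0 hq1 h

lemma main_ind (p q : ℝ) (hp : 0 ≤ p) (hpq : p ≤ q) (hq1 : q ≤ 1) (hsum : p + q = 1) :
    ∀ (V : Finset ι) (H : Finset (Finset ι)) (K : Multiset (Finset (Finset ι))) (x0 : ι → Bool),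
      Cov H x0 → (∀ i, i ∉ V → x0 i = false) →
      (∏ i ∈ V, (if x0 i = true then p else q)) * q ^ cc V K ≤ Ssum p q V H (DK V H K) := by
  have hq0 : 0 ≤ q := le_trans hp hpq
  intro V
  induction V using Finset.strongInduction with
  | _ V IH =>
  intro H K x0 hcov hzero
  rcases eq_or_ne V ∅ with hVemp | hVne
  · -- base case
    subst hVemp
    have hx0 : x0 = fun _ => false := funext fun i => hzero i (Finset.notMem_empty i)
    subst hx0
    have hDK : DK (∅ : Finset ι) H K = K := by simp [DK]
    rw [hDK]
    unfold Ssum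
    rw [Finset.sum_eq_single_of_mem (fun _ => false) (Finset.mem_univ _)]
    · unfold Wt
      rw [if_pos ⟨hcov, fun i _ => rfl⟩, one_mul, Finset.prod_empty, one_mul, bns_prod]
      rw [one_mul]
      apply pow_le_pow_cc hq0 hq1
      unfold cc
      apply Multiset.card_le_card
      apply Multiset.monotone_filter_right
      intro F hF
      intro g hg
      obtain ⟨j, hj⟩ := hF g hg
      simp at hj
    · intro x _ hxne
      unfold Wt
      rw [if_neg, zero_mul]
      rintro ⟨-, h2⟩
      exact hxne (funext fun i => h2 i (Finset.notMem_empty i))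
  · -- inductive step
    have hpick : ∃ n, n ∈ V ∧ (x0 n = false ∨ ∀ i ∈ V, x0 i = true) := by
      by_cases hex : ∃ m ∈ V, x0 m = false
      · obtain ⟨m, hm, hf⟩ := hex; exact ⟨m, hm, Or.inl hf⟩
      · push_neg at hex
        obtain ⟨m, hm⟩ := Finset.nonempty_iff_ne_empty.mpr hVne
        refine ⟨m, hm, Or.inr (fun i hi => ?_)⟩
        have := hex i hi
        revert this; cases x0 i <;> simp
    obtain ⟨n, hnV, hcase⟩ := hpick
    set V' := V.erase n with hV'
    have hss : V' ⊂ V := Finset.erase_ssubset hnV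
    have hzero' : ∀ x' : ι → Bool, x' n = false → (∀ i, i ∉ V → x' i = false) →
        (∀ i, i ∉ V' → x' i = false) := by
      intro x' hxn hz i hi
      by_cases hin : i = n
      · subst hin; exact hxn
      · exact hz i (fun hiV => hi (Finset.mem_erase.mpr ⟨hin, hiV⟩))
    rw [ssum_rec p q hnV H (DK V H K), dk_map0 hnV H K, dk_map1 hnV H K]
    set H0 := H.image (fun e => e.erase n) with hH0
    set H1 := H.filter (fun e => n ∉ e) with hH1
    set K0 := ((En n H).image (fun g => g.erase n)) ::ₘ K.map (fun F => F.image (fun g => g.erase n)) with hK0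
    set K1 := (En n H) ::ₘ K.map (fun F => F.filter (fun g => n ∉ g)) with hK1
    have hc0 : cc V' K0 ≤ cc V K + 1 := by
      calc cc V' K0 ≤ cc V' (K.map (fun F => F.image (fun g => g.erase n))) + 1 :=
            cc_cons_le _ _ _
        _ ≤ cc V K + 1 := by
            have h := cc_map0_le V n K
            rw [← hV'] at h
            omega
    have hc1 : cc V' K1 ≤ cc V K + 1 := by
      calc cc V' K1 ≤ cc V' (K.map (fun F => F.filter (fun g => n ∉ g))) + 1 :=
            cc_cons_le _ _ _
        _ ≤ cc V K + 1 := by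
            have h := cc_map1_le hnV K
            rw [← hV'] at h
            omega
    have hqp1 : q + p = 1 := by linarith
    rcases hcase with hA | hall
    · -- Case A : x0 n = false
      have hcov0 : Cov H0 x0 := (cov_image_erase hA H).mpr hcov
      have hcov1 : Cov H1 x0 := cov_mono (Finset.filter_subset _ _) hcov
      have hz' := hzero' x0 hA hzero
      have IH0 := IH V' hss H0 K0 x0 hcov0 hz'
      have IH1 := IH V' hss H1 K1 x0 hcov1 hz'
      have hpi' : 0 ≤ ∏ i ∈ V', (if x0 i = true then p else q) := by
        apply Finset.prod_nonneg; intro i _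
        by_cases h : x0 i = true <;> simp [h, hp, hq0]
      have hS0 : (∏ i ∈ V', (if x0 i = true then p else q)) * q ^ (cc V K + 1)
          ≤ Ssum p q V' H0 (DK V' H0 K0) :=
        le_trans (mul_le_mul_of_nonneg_left (pow_le_pow_cc hq0 hq1 hc0) hpi') IH0
      have hS1 : (∏ i ∈ V', (if x0 i = true then p else q)) * q ^ (cc V K + 1)
          ≤ Ssum p q V' H1 (DK V' H1 K1) :=
        le_trans (mul_le_mul_of_nonneg_left (pow_le_pow_cc hq0 hq1 hc1) hpi') IH1
      have hprodV : (∏ i ∈ V, (if x0 i = true then p else q))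
          = q * ∏ i ∈ V', (if x0 i = true then p else q) := by
        rw [← Finset.mul_prod_erase V _ hnV, hA]
        simp [hV']
      calc (∏ i ∈ V, (if x0 i = true then p else q)) * q ^ cc V K
          = (∏ i ∈ V', (if x0 i = true then p else q)) * q ^ (cc V K + 1) := by
            rw [hprodV, pow_succ]; ring
        _ = q * ((∏ i ∈ V', (if x0 i = true then p else q)) * q ^ (cc V K + 1))
            + p * ((∏ i ∈ V', (if x0 i = true then p else q)) * q ^ (cc V K + 1)) := by
            rw [← add_mul, hqp1, one_mul]
        _ ≤ q * Ssum p q V' H0 (DK V' H0 K0) + p * Ssum p q V' H1 (DK V' H1 K1) :=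
            add_le_add (mul_le_mul_of_nonneg_left hS0 hq0)
              (mul_le_mul_of_nonneg_left hS1 hp)
    · -- Case B : x0 ≡ true on V
      have hxn : x0 n = true := hall n hnV
      set xb := Function.update x0 n false with hxb
      have hxbn : xb n = false := Function.update_self n false x0
      have hzb : ∀ i, i ∉ V → xb i = false := by
        intro i hi
        have hin : i ≠ n := by rintro rfl; exact hi hnV
        rw [hxb, Function.update_of_ne hin]
        exact hzero i hi
      have hz'b := hzero' xb hxbn hzb
      have hcov1b : Cov H1 xb := by
        intro e he
        obtain ⟨he', hne⟩ := Finset.mem_filter.mp he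
        obtain ⟨j, hj, hxj⟩ := hcov e he'
        have hjn : j ≠ n := fun h => hne (h ▸ hj)
        exact ⟨j, hj, by rw [hxb, Function.update_of_ne hjn]; exact hxj⟩
      have hpib : (∏ i ∈ V', (if xb i = true then p else q))
          = (∏ i ∈ V', (if x0 i = true then p else q)) := by
        apply Finset.prod_congr rfl
        intro i hi
        rw [hxb, Function.update_of_ne (Finset.mem_erase.mp hi).1]
      have hpi' : 0 ≤ ∏ i ∈ V', (if x0 i = true then p else q) := by
        apply Finset.prod_nonneg; intro i _
        by_cases h : x0 i = true <;> simp [h, hp, hq0]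
      have hprodV : (∏ i ∈ V, (if x0 i = true then p else q))
          = p * ∏ i ∈ V', (if x0 i = true then p else q) := by
        rw [← Finset.mul_prod_erase V _ hnV, hxn]
        simp [hV']
      have IH1 := IH V' hss H1 K1 xb hcov1b hz'b
      rw [hpib] at IH1
      by_cases hd : Cov (En n H) x0
      · -- B1 : n disguised in x0
        have hcov0b : Cov H0 xb := by
          intro g hg
          obtain ⟨e, he, rfl⟩ := Finset.mem_image.mp hg
          by_cases hne : n ∈ e
          · have hmem : e.erase n ∈ En n H :=
              Finset.mem_image_of_mem _ (Finset.mem_filter.mpr ⟨he, hne⟩)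
            obtain ⟨j, hj, hxj⟩ := hd _ hmem
            exact ⟨j, hj, by
              rw [hxb, Function.update_of_ne (Finset.mem_erase.mp hj).1]; exact hxj⟩
          · obtain ⟨j, hj, hxj⟩ := hcov e he
            have hjn : j ≠ n := fun h => hne (h ▸ hj)
            exact ⟨j, Finset.mem_erase.mpr ⟨hjn, hj⟩, by
              rw [hxb, Function.update_of_ne hjn]; exact hxj⟩
        have IH0 := IH V' hss H0 K0 xb hcov0b hz'b
        rw [hpib] at IH0
        have hS0 : (∏ i ∈ V', (if x0 i = true then p else q)) * q ^ (cc V K + 1)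
            ≤ Ssum p q V' H0 (DK V' H0 K0) :=
          le_trans (mul_le_mul_of_nonneg_left (pow_le_pow_cc hq0 hq1 hc0) hpi') IH0
        have hS1 : (∏ i ∈ V', (if x0 i = true then p else q)) * q ^ (cc V K + 1)
            ≤ Ssum p q V' H1 (DK V' H1 K1) :=
          le_trans (mul_le_mul_of_nonneg_left (pow_le_pow_cc hq0 hq1 hc1) hpi') IH1
        calc (∏ i ∈ V, (if x0 i = true then p else q)) * q ^ cc V K
            = p * ((∏ i ∈ V', (if x0 i = true then p else q)) * q ^ cc V K) := by
              rw [hprodV]; ring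
          _ ≤ q * ((∏ i ∈ V', (if x0 i = true then p else q)) * q ^ cc V K) := by
              apply mul_le_mul_of_nonneg_right hpq
              positivity
          _ = q * ((∏ i ∈ V', (if x0 i = true then p else q)) * q ^ (cc V K + 1))
              + p * ((∏ i ∈ V', (if x0 i = true then p else q)) * q ^ (cc V K + 1)) := by
              rw [← add_mul, hqp1, one_mul, pow_succ]; ring
          _ ≤ q * Ssum p q V' H0 (DK V' H0 K0) + p * Ssum p q V' H1 (DK V' H1 K1) :=
              add_le_add (mul_le_mul_of_nonneg_left hS0 hq0)
                (mul_le_mul_of_nonneg_left hS1 hp)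
      · -- B2 : n not disguised in x0
        have hbadE : ¬ Good V' (En n H) := by
          intro hgood
          unfold Cov at hd
          push_neg at hd
          obtain ⟨g, hg, hgall⟩ := hd
          obtain ⟨j, hj⟩ := hgood g hg
          rw [Finset.mem_inter] at hj
          have hjV : j ∈ V := Finset.mem_of_mem_erase hj.2
          exact hgall j hj.1 (hall j hjV)
        have hc1' : cc V' K1 ≤ cc V K := by
          rw [hK1, cc_cons_of_neg hbadE]
          have h := cc_map1_le hnV K
          rw [← hV'] at h
          exact h
        have hS1 : (∏ i ∈ V', (if x0 i = true then p else q)) * q ^ (cc V K)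
            ≤ Ssum p q V' H1 (DK V' H1 K1) :=
          le_trans (mul_le_mul_of_nonneg_left (pow_le_pow_cc hq0 hq1 hc1') hpi') IH1
        have hS0 : (0:ℝ) ≤ Ssum p q V' H0 (DK V' H0 K0) := ssum_nonneg hp hq0 _ _ _
        calc (∏ i ∈ V, (if x0 i = true then p else q)) * q ^ cc V K
            = p * ((∏ i ∈ V', (if x0 i = true then p else q)) * q ^ cc V K) := by
              rw [hprodV]; ring
          _ ≤ p * Ssum p q V' H1 (DK V' H1 K1) := mul_le_mul_of_nonneg_left hS1 hp
          _ ≤ q * Ssum p q V' H0 (DK V' H0 K0) + p * Ssum p q V' H1 (DK V' H1 K1) := by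
              nlinarith [mul_nonneg hq0 hS0]

end GTAux


namespace GTAux
open scoped Classical

lemma disguisedCount_eq {T n : ℕ} (M : Fin T → Fin n → Bool) (x : Fin n → Bool) :
    disguisedCount M x = (Finset.univ.filter (fun i => TotallyDisguised M x i)).card := by
  rw [disguisedCount, Nat.card_eq_fintype_card, Fintype.card_subtype]

section Translate

variable {T n : ℕ} (M : Fin T → Fin n → Bool) (x0 : Fin n → Bool)

/-- test outcome vector -/
def yv (x : Fin n → Bool) : Fin T → Bool := fun t => decide (∃ i, M t i = true ∧ x i = true)

noncomputable def Vset : Finset (Fin n) :=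
  Finset.univ.filter (fun i => ∀ t, M t i = true → yv M x0 t = true)

noncomputable def Hset : Finset (Finset (Fin n)) :=
  (Finset.univ.filter (fun t => yv M x0 t = true)).image
    (fun t => Finset.univ.filter (fun i => M t i = true))

lemma yv_true_iff (x : Fin n → Bool) (t : Fin T) :
    yv M x t = true ↔ ∃ i, M t i = true ∧ x i = true := by
  simp [yv]

lemma fiber_iff (x : Fin n → Bool) :
    yv M x = yv M x0 ↔ (Cov (Hset M x0) x ∧ ∀ i, i ∉ Vset M x0 → x i = false) := by
  constructor
  · intro h
    constructor
    · intro g hg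
      obtain ⟨t, ht, rfl⟩ := Finset.mem_image.mp hg
      have ht' : yv M x0 t = true := (Finset.mem_filter.mp ht).2
      have : yv M x t = true := by rw [h]; exact ht'
      obtain ⟨i, hMi, hxi⟩ := (yv_true_iff M x t).mp this
      exact ⟨i, Finset.mem_filter.mpr ⟨Finset.mem_univ _, hMi⟩, hxi⟩
    · intro i hi
      rw [Vset, Finset.mem_filter] at hi
      push_neg at hi
      obtain ⟨t, hMt, hyt⟩ := hi (Finset.mem_univ _)
      have hyxt : ¬ (yv M x t = true) := by rw [h]; exact hyt
      rw [yv_true_iff] at hyxt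
      push_neg at hyxt
      have := hyxt i hMt
      revert this; cases x i <;> simp
  · rintro ⟨hcov, hz⟩
    funext t
    by_cases ht : yv M x0 t = true
    · have hg : Finset.univ.filter (fun i => M t i = true) ∈ Hset M x0 :=
        Finset.mem_image_of_mem _ (Finset.mem_filter.mpr ⟨Finset.mem_univ _, ht⟩)
      obtain ⟨i, hi, hxi⟩ := hcov _ hg
      have hMi : M t i = true := (Finset.mem_filter.mp hi).2
      rw [ht, (yv_true_iff M x t).mpr ⟨i, hMi, hxi⟩]
    · have ht' : yv M x0 t = false := by revert ht; cases yv M x0 t <;> simp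
      rw [ht']
      by_contra hcon
      have hxt : yv M x t = true := by revert hcon; cases yv M x t <;> simp
      obtain ⟨i, hMi, hxi⟩ := (yv_true_iff M x t).mp hxt
      have hiV : i ∈ Vset M x0 := by
        by_contra hiV
        rw [hz i hiV] at hxi
        exact absurd hxi (by simp)
      rw [Vset, Finset.mem_filter] at hiV
      exact ht (hiV.2 t hMi)

lemma disg_iff (x : Fin n → Bool) (hyv : yv M x = yv M x0) (i : Fin n) :
    TotallyDisguised M x i ↔ (i ∈ Vset M x0 ∧ Cov (En i (Hset M x0)) x) := by
  constructor
  · intro hTD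
    constructor
    · rw [Vset, Finset.mem_filter]
      refine ⟨Finset.mem_univ _, fun t hMt => ?_⟩
      obtain ⟨j, hji, hMj, hxj⟩ := hTD t hMt
      rw [← hyv]
      exact (yv_true_iff M x t).mpr ⟨j, hMj, hxj⟩
    · intro g hg
      rw [En, Finset.mem_image] at hg
      obtain ⟨e, he, rfl⟩ := hg
      rw [Finset.mem_filter] at he
      obtain ⟨heH, hie⟩ := he
      obtain ⟨t, -, rfl⟩ := Finset.mem_image.mp heH
      have hMti : M t i = true := (Finset.mem_filter.mp hie).2
      obtain ⟨j, hji, hMj, hxj⟩ := hTD t hMti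
      exact ⟨j, Finset.mem_erase.mpr ⟨hji,
        Finset.mem_filter.mpr ⟨Finset.mem_univ _, hMj⟩⟩, hxj⟩
  · rintro ⟨hiV, hcov⟩
    intro t hMt
    rw [Vset, Finset.mem_filter] at hiV
    have hyt : yv M x0 t = true := hiV.2 t hMt
    have heH : Finset.univ.filter (fun j => M t j = true) ∈ Hset M x0 :=
      Finset.mem_image_of_mem _ (Finset.mem_filter.mpr ⟨Finset.mem_univ _, hyt⟩)
    have hie : i ∈ Finset.univ.filter (fun j => M t j = true) :=
      Finset.mem_filter.mpr ⟨Finset.mem_univ _, hMt⟩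
    have hg : (Finset.univ.filter (fun j => M t j = true)).erase i ∈ En i (Hset M x0) :=
      Finset.mem_image_of_mem _ (Finset.mem_filter.mpr ⟨heH, hie⟩)
    obtain ⟨j, hj, hxj⟩ := hcov _ hg
    rw [Finset.mem_erase] at hj
    exact ⟨j, hj.1, (Finset.mem_filter.mp hj.2).2, hxj⟩

end Translate

end GTAux

namespace GTAux
open scoped Classical

lemma pifull_split {T n : ℕ} (M : Fin T → Fin n → Bool) (x0 : Fin n → Bool)
    (p q : ℝ) (x : Fin n → Bool) (hz : ∀ i, i ∉ Vset M x0 → x i = false) :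
    (∏ i, (if x i then p else q))
      = (∏ i ∈ Vset M x0, (if x i = true then p else q)) * q ^ (Vset M x0)ᶜ.card := by
  rw [← Finset.prod_mul_prod_compl (Vset M x0) (fun i => if x i = true then p else q)]
  congr 1
  rw [← Finset.prod_const]
  apply Finset.prod_congr rfl
  intro i hi
  rw [hz i (Finset.mem_compl.mp hi)]
  simp

lemma wt_fiber_eq {T n : ℕ} (M : Fin T → Fin n → Bool) (x0 : Fin n → Bool)
    (p q : ℝ) (x : Fin n → Bool) :
    (if yv M x = yv M x0 then (∏ i, (if x i then p else q)) * q ^ disguisedCount M x else 0)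
      = q ^ (Vset M x0)ᶜ.card * Wt p q (Vset M x0) (Hset M x0) (DK (Vset M x0) (Hset M x0) 0) x := by
  by_cases hfib : yv M x = yv M x0
  · rw [if_pos hfib]
    obtain ⟨hcov, hz⟩ := (fiber_iff M x0 x).mp hfib
    unfold Wt
    rw [if_pos ⟨hcov, hz⟩, one_mul]
    have hDK : DK (Vset M x0) (Hset M x0) (0 : Multiset (Finset (Finset (Fin n))))
        = (Vset M x0).val.map (fun i => En i (Hset M x0)) := by
      simp [DK]
    rw [hDK, bns_prod]
    have hcard : (Multiset.filter (fun F => Cov F x)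
          ((Vset M x0).val.map (fun i => En i (Hset M x0)))).card
        = disguisedCount M x := by
      rw [Multiset.filter_map, Multiset.card_map]
      rw [disguisedCount_eq]
      have : Finset.univ.filter (fun i => TotallyDisguised M x i)
          = (Vset M x0).filter (fun i => Cov (En i (Hset M x0)) x) := by
        ext i
        simp only [Finset.mem_filter, Finset.mem_univ, true_and]
        rw [disg_iff M x0 x hfib i]
      rw [this]
      rfl
    rw [hcard, pifull_split M x0 p q x hz]
    ring
  · rw [if_neg hfib]
    unfold Wt
    rw [if_neg, zero_mul, mul_zero]
    intro hcon
    exact hfib ((fiber_iff M x0 x).mpr hcon)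

lemma star {T n : ℕ} (M : Fin T → Fin n → Bool) {p : ℝ} (hp0 : 0 < p) (hp : p ≤ 1 / 2)
    (x0 : Fin n → Bool) :
    (∏ i, (if x0 i then p else 1 - p))
      ≤ ∑ x ∈ Finset.univ.filter (fun x : Fin n → Bool => yv M x = yv M x0),
          (∏ i, (if x i then p else 1 - p)) * (1 - p) ^ disguisedCount M x := by
  set q : ℝ := 1 - p with hq
  have hqp : p ≤ q := by rw [hq]; linarith
  have hq1 : q ≤ 1 := by rw [hq]; linarith
  have hq0 : 0 ≤ q := le_trans hp0.le hqp
  have hfib0 := (fiber_iff M x0 x0).mp rfl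
  have hmain := main_ind p q hp0.le hqp hq1 (by rw [hq]; ring)
    (Vset M x0) (Hset M x0) 0 x0 hfib0.1 hfib0.2
  have hcc0 : cc (Vset M x0) (0 : Multiset (Finset (Finset (Fin n)))) = 0 := by
    simp [cc]
  rw [hcc0, pow_zero, mul_one] at hmain
  have hsumeq : ∑ x ∈ Finset.univ.filter (fun x : Fin n → Bool => yv M x = yv M x0),
        (∏ i, (if x i then p else q)) * q ^ disguisedCount M x
      = q ^ (Vset M x0)ᶜ.card
          * Ssum p q (Vset M x0) (Hset M x0) (DK (Vset M x0) (Hset M x0) 0) := by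
    rw [Finset.sum_filter, Ssum, Finset.mul_sum]
    apply Finset.sum_congr rfl
    intro x _
    exact wt_fiber_eq M x0 p q x
  rw [hsumeq, pifull_split M x0 p q x0 hfib0.2]
  calc (∏ i ∈ Vset M x0, (if x0 i = true then p else q)) * q ^ (Vset M x0)ᶜ.card
      ≤ Ssum p q (Vset M x0) (Hset M x0) (DK (Vset M x0) (Hset M x0) 0)
          * q ^ (Vset M x0)ᶜ.card := by
        apply mul_le_mul_of_nonneg_right hmain
        positivity
    _ = q ^ (Vset M x0)ᶜ.card * Ssum p q (Vset M x0) (Hset M x0)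
          (DK (Vset M x0) (Hset M x0) 0) := by ring

end GTAux


/-- Under the i.i.d. prior with `0 < p ≤ 1/2`, the success probability of any decoder is at
most `E[(1−p)^{D(x)}]`, and hence at most `E[exp(−p·D(x))]`. -/
theorem success_le_expectation_of_disguised (T n : ℕ) (M : Fin T → Fin n → Bool)
    (p : ℝ) (hp0 : 0 < p) (hp : p ≤ 1 / 2)
    (f : (Fin T → Bool) → (Fin n → Bool)) :
    (∑ x : Fin n → Bool,
        (∏ i, (if x i then p else 1 - p)) *
          (if f (fun t => decide (∃ i, M t i = true ∧ x i = true)) = x then (1 : ℝ) else 0))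
      ≤ ∑ x : Fin n → Bool,
          (∏ i, (if x i then p else 1 - p)) * (1 - p) ^ disguisedCount M x
    ∧
    (∑ x : Fin n → Bool,
        (∏ i, (if x i then p else 1 - p)) *
          (if f (fun t => decide (∃ i, M t i = true ∧ x i = true)) = x then (1 : ℝ) else 0))
      ≤ ∑ x : Fin n → Bool,
          (∏ i, (if x i then p else 1 - p)) * Real.exp (-p * disguisedCount M x) := by
  have hpi : ∀ x : Fin n → Bool, (0:ℝ) ≤ ∏ i, (if x i then p else 1 - p) := by
    intro x
    apply Finset.prod_nonneg
    intro i _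
    by_cases h : x i <;> simp [h] <;> linarith
  have h1 : (∑ x : Fin n → Bool,
        (∏ i, (if x i then p else 1 - p)) *
          (if f (fun t => decide (∃ i, M t i = true ∧ x i = true)) = x then (1 : ℝ) else 0))
      ≤ ∑ x : Fin n → Bool,
          (∏ i, (if x i then p else 1 - p)) * (1 - p) ^ disguisedCount M x := by
    have hy : ∀ x : Fin n → Bool,
        (fun t => decide (∃ i, M t i = true ∧ x i = true)) = GTAux.yv M x := fun _ => rfl
    set A : Finset (Fin n → Bool) :=
      Finset.univ.filter (fun x => f (GTAux.yv M x) = x) with hA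
    have hLHS : (∑ x : Fin n → Bool,
          (∏ i, (if x i then p else 1 - p)) *
            (if f (fun t => decide (∃ i, M t i = true ∧ x i = true)) = x then (1 : ℝ) else 0))
        = ∑ x ∈ A, (∏ i, (if x i then p else 1 - p)) := by
      rw [hA, Finset.sum_filter]
      apply Finset.sum_congr rfl
      intro x _
      rw [hy x]
      by_cases h : f (GTAux.yv M x) = x
      · rw [if_pos h, if_pos h, mul_one]
      · rw [if_neg h, if_neg h, mul_zero]
    rw [hLHS]
    set fib : (Fin n → Bool) → Finset (Fin n → Bool) :=
      fun x0 => Finset.univ.filter (fun x => GTAux.yv M x = GTAux.yv M x0) with hfib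
    have hstep1 : (∑ x ∈ A, (∏ i, (if x i then p else 1 - p)))
        ≤ ∑ x0 ∈ A, ∑ x ∈ fib x0,
            (∏ i, (if x i then p else 1 - p)) * (1 - p) ^ disguisedCount M x := by
      apply Finset.sum_le_sum
      intro x0 _
      exact GTAux.star M hp0 hp x0
    have hdisj : (A : Set (Fin n → Bool)).PairwiseDisjoint fib := by
      intro a ha b hb hab
      show Disjoint (fib a) (fib b)
      rw [Finset.disjoint_left]
      intro x hxa hxb
      rw [hfib] at hxa hxb
      have h1 : GTAux.yv M x = GTAux.yv M a := (Finset.mem_filter.mp hxa).2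
      have h2 : GTAux.yv M x = GTAux.yv M b := (Finset.mem_filter.mp hxb).2
      have ha' : f (GTAux.yv M a) = a := by
        have := Finset.mem_coe.mp ha; rw [hA, Finset.mem_filter] at this; exact this.2
      have hb' : f (GTAux.yv M b) = b := by
        have := Finset.mem_coe.mp hb; rw [hA, Finset.mem_filter] at this; exact this.2
      apply hab
      rw [← ha', ← hb', ← h1, ← h2]
    have hstep2 : ∑ x0 ∈ A, ∑ x ∈ fib x0,
          (∏ i, (if x i then p else 1 - p)) * (1 - p) ^ disguisedCount M x
        = ∑ x ∈ A.biUnion fib,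
            (∏ i, (if x i then p else 1 - p)) * (1 - p) ^ disguisedCount M x :=
      (Finset.sum_biUnion hdisj).symm
    have hstep3 : ∑ x ∈ A.biUnion fib,
          (∏ i, (if x i then p else 1 - p)) * (1 - p) ^ disguisedCount M x
        ≤ ∑ x : Fin n → Bool,
            (∏ i, (if x i then p else 1 - p)) * (1 - p) ^ disguisedCount M x := by
      apply Finset.sum_le_sum_of_subset_of_nonneg (Finset.subset_univ _)
      intro x _ _
      apply mul_nonneg (hpi x)
      apply pow_nonneg
      linarith
    linarith
  refine ⟨h1, le_trans h1 ?_⟩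
  apply Finset.sum_le_sum
  intro x _
  apply mul_le_mul_of_nonneg_left _ (hpi x)
  have hle : (1 - p) ≤ Real.exp (-p) := by
    have := Real.add_one_le_exp (-p)
    linarith
  calc (1 - p) ^ disguisedCount M x
      ≤ Real.exp (-p) ^ disguisedCount M x := by
        apply pow_le_pow_left₀ (by linarith) hle
    _ = Real.exp (-p * disguisedCount M x) := by
        rw [← Real.exp_nat_mul]
        congr 1
        ring
end

section
/- Fix a constant λ > 0 and for each integer n ≥ 2 define 𝓛_n = min over integers x ∈ {2, 3, …, n} of x·log(1 − (1 − λ/log n)^{x−1}). Then for every ε > 0 there exists n_0 such that for all n ≥ n_0, 𝓛_n ≥ −(1+ε)·((log 2)²/λ)·log n; equivalently, exp(𝓛_n) ≥ (1/2)^{(1+ε)·(log 2)·(log n)/λ} for all sufficiently large n. -/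
open Finset

noncomputable def phiF (t : ℝ) : ℝ := t * Real.log (1 - Real.exp (-t))
noncomputable def psiF (t : ℝ) : ℝ :=
  Real.log (1 - Real.exp (-t)) + t * (Real.exp (-t) / (1 - Real.exp (-t)))

lemma exp_neg_lt_one' {t : ℝ} (ht : 0 < t) : Real.exp (-t) < 1 := by
  have := Real.exp_lt_exp.mpr (by linarith : -t < 0)
  simpa using this

lemma one_sub_exp_pos {t : ℝ} (ht : 0 < t) : 0 < 1 - Real.exp (-t) := by
  linarith [exp_neg_lt_one' ht]

lemma exp_cubic {s : ℝ} (hs : 0 ≤ s) : 1 + s + s^2/2 + s^3/6 ≤ Real.exp s := by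
  have h := Real.sum_le_exp_of_nonneg hs 4
  have : ∑ i ∈ Finset.range 4, s ^ i / (i.factorial : ℝ) = 1 + s + s^2/2 + s^3/6 := by
    simp [Finset.sum_range_succ, Nat.factorial]
  linarith [this ▸ h]

lemma exp_quartic {s : ℝ} (hs : 0 ≤ s) : 1 + s + s^2/2 + s^3/6 + s^4/24 ≤ Real.exp s := by
  have h := Real.sum_le_exp_of_nonneg hs 5
  have : ∑ i ∈ Finset.range 5, s ^ i / (i.factorial : ℝ) = 1 + s + s^2/2 + s^3/6 + s^4/24 := by
    simp [Finset.sum_range_succ, Nat.factorial]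
  linarith [this ▸ h]

lemma hasDerivAt_one_sub_exp (s : ℝ) :
    HasDerivAt (fun t : ℝ => 1 - Real.exp (-t)) (Real.exp (-s)) s := by
  have h : HasDerivAt (fun t : ℝ => Real.exp (-t)) (Real.exp (-s) * (-1)) s :=
    (Real.hasDerivAt_exp (-s)).comp s (hasDerivAt_neg s)
  simpa using h.const_sub 1

lemma hasDerivAt_phi {s : ℝ} (hs : 0 < s) : HasDerivAt phiF (psiF s) s := by
  have hne : 1 - Real.exp (-s) ≠ 0 := (one_sub_exp_pos hs).ne'
  have hlog : HasDerivAt (fun t : ℝ => Real.log (1 - Real.exp (-t)))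
      (Real.exp (-s) / (1 - Real.exp (-s))) s := (hasDerivAt_one_sub_exp s).log hne
  have h := (hasDerivAt_id s).mul hlog
  have hfun : phiF = (id * fun t : ℝ => Real.log (1 - Real.exp (-t))) := by
    funext t; simp [phiF]
  rw [hfun]
  refine h.congr_deriv ?_
  simp [psiF]

lemma hasDerivAt_psi {s : ℝ} (hs : 0 < s) :
    HasDerivAt psiF (2 * (Real.exp (-s) / (1 - Real.exp (-s)))
      - s * Real.exp (-s) / (1 - Real.exp (-s))^2) s := by
  have hpos := one_sub_exp_pos hs
  have hne : 1 - Real.exp (-s) ≠ 0 := hpos.ne'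
  have hE : HasDerivAt (fun t : ℝ => Real.exp (-t)) (-Real.exp (-s)) s := by
    have := (hasDerivAt_neg s).exp
    simpa using this
  have hlog : HasDerivAt (fun t : ℝ => Real.log (1 - Real.exp (-t)))
      (Real.exp (-s) / (1 - Real.exp (-s))) s := (hasDerivAt_one_sub_exp s).log hne
  have hinv : HasDerivAt (fun t : ℝ => (1 - Real.exp (-t))⁻¹)
      (-(Real.exp (-s)) / (1 - Real.exp (-s))^2) s := (hasDerivAt_one_sub_exp s).inv hne
  have hg := hE.mul hinv
  have htg := (hasDerivAt_id s).mul hg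
  have h := hlog.add htg
  have heq : psiF = fun t : ℝ => Real.log (1 - Real.exp (-t)) +
      t * (Real.exp (-t) * (1 - Real.exp (-t))⁻¹) := by
    funext t; simp [psiF, div_eq_mul_inv]
  rw [heq]
  refine h.congr_deriv ?_
  simp only [Pi.mul_apply, id]
  field_simp
  ring

lemma rho_pos {s : ℝ} (hs : 0 < s) (hs2 : s ≤ 3/2) :
    0 < 2 * (Real.exp (-s) / (1 - Real.exp (-s))) - s * Real.exp (-s) / (1 - Real.exp (-s))^2 := by
  have hE0 : 0 < Real.exp (-s) := Real.exp_pos _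
  have h1 : 0 < 1 - Real.exp (-s) := one_sub_exp_pos hs
  have hEs : 0 < Real.exp s := Real.exp_pos s
  have hcube := exp_cubic hs.le
  have h3 : s^2 ≤ (3/2)^2 := by nlinarith
  have h4 : s^3 ≤ (3/2)^3 := by nlinarith
  have hpoly : 0 < s * (6 - s^2 - s^3) := mul_pos hs (by nlinarith)
  have h2 : 2 < (2 - s) * Real.exp s := by
    nlinarith [mul_le_mul_of_nonneg_left hcube (by linarith : (0:ℝ) ≤ 2 - s)]
  have hkey : s < 2 * (1 - Real.exp (-s)) := by
    rw [Real.exp_neg]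
    nlinarith [mul_lt_mul_of_pos_right h2 (inv_pos.mpr hEs), mul_inv_cancel₀ hEs.ne']
  have heq : 2 * (Real.exp (-s) / (1 - Real.exp (-s))) - s * Real.exp (-s) / (1 - Real.exp (-s))^2
      = Real.exp (-s) * (2 * (1 - Real.exp (-s)) - s) / (1 - Real.exp (-s))^2 := by
    field_simp
  rw [heq]
  apply div_pos (mul_pos hE0 (by linarith)) (by positivity)

lemma exp_neg_log2 : Real.exp (-Real.log 2) = 2⁻¹ := by
  rw [Real.exp_neg, Real.exp_log]; norm_num

lemma psi_log2 : psiF (Real.log 2) = 0 := by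
  have h2 : (1:ℝ) - 2⁻¹ = 2⁻¹ := by norm_num
  simp only [psiF, exp_neg_log2, h2, Real.log_inv, div_self (by norm_num : (2:ℝ)⁻¹ ≠ 0), mul_one]
  ring

lemma phi_log2 : phiF (Real.log 2) = -(Real.log 2)^2 := by
  have h2 : (1:ℝ) - 2⁻¹ = 2⁻¹ := by norm_num
  simp only [phiF, exp_neg_log2, h2, Real.log_inv]
  ring

lemma contOn_log_part {a b : ℝ} (ha : 0 < a) :
    ContinuousOn (fun t : ℝ => Real.log (1 - Real.exp (-t))) (Set.Icc a b) := by
  apply ContinuousOn.log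
  · exact (continuous_const.sub (Real.continuous_exp.comp continuous_neg)).continuousOn
  · intro t ht
    exact (one_sub_exp_pos (lt_of_lt_of_le ha ht.1)).ne'

lemma contOn_phi {a b : ℝ} (ha : 0 < a) : ContinuousOn phiF (Set.Icc a b) :=
  continuousOn_id.mul (contOn_log_part ha)

lemma contOn_psi {a b : ℝ} (ha : 0 < a) : ContinuousOn psiF (Set.Icc a b) := by
  apply (contOn_log_part ha).add
  apply continuousOn_id.mul
  apply ContinuousOn.div
  · exact (Real.continuous_exp.comp continuous_neg).continuousOn
  · exact (continuous_const.sub (Real.continuous_exp.comp continuous_neg)).continuousOn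
  · intro t ht
    exact (one_sub_exp_pos (lt_of_lt_of_le ha ht.1)).ne'

lemma psi_lt_psi {a b : ℝ} (ha : 0 < a) (hab : a < b) (hb : b ≤ 3/2) : psiF a < psiF b := by
  have H : StrictMonoOn psiF (Set.Icc a b) := by
    apply strictMonoOn_of_deriv_pos (convex_Icc a b) (contOn_psi ha)
    intro t ht
    rw [interior_Icc] at ht
    rw [(hasDerivAt_psi (ha.trans ht.1)).deriv]
    exact rho_pos (ha.trans ht.1) (le_trans ht.2.le hb)
  exact H (Set.left_mem_Icc.mpr hab.le) (Set.right_mem_Icc.mpr hab.le) hab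

lemma key_ineq {s : ℝ} (hs : 0 < s) :
    -(Real.log 2)^2 ≤ s * Real.log (1 - Real.exp (-s)) := by
  have hc0 : 0 < Real.log 2 := Real.log_pos one_lt_two
  have hc32 : Real.log 2 < 3/2 := by linarith [Real.log_two_lt_d9]
  show -(Real.log 2)^2 ≤ phiF s
  rcases le_or_gt s (3/2) with hs32 | hs32
  · rcases lt_trichotomy s (Real.log 2) with h | h | h
    · have hA : AntitoneOn phiF (Set.Icc s (Real.log 2)) := by
        apply antitoneOn_of_deriv_nonpos (convex_Icc _ _) (contOn_phi hs) ?_ ?_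
        · intro t ht
          rw [interior_Icc] at ht
          exact (hasDerivAt_phi (hs.trans ht.1)).differentiableAt.differentiableWithinAt
        intro t ht
        rw [interior_Icc] at ht
        rw [(hasDerivAt_phi (hs.trans ht.1)).deriv]
        have hlt := psi_lt_psi (hs.trans ht.1) ht.2 hc32.le
        rw [psi_log2] at hlt
        linarith
      have := hA (Set.left_mem_Icc.mpr h.le) (Set.right_mem_Icc.mpr h.le) h.le
      rw [phi_log2] at this
      linarith
    · rw [h, phi_log2]
    · have hB : MonotoneOn phiF (Set.Icc (Real.log 2) s) := by
        apply monotoneOn_of_deriv_nonneg (convex_Icc _ _) (contOn_phi hc0) ?_ ?_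
        · intro t ht
          rw [interior_Icc] at ht
          exact (hasDerivAt_phi (hc0.trans ht.1)).differentiableAt.differentiableWithinAt
        intro t ht
        rw [interior_Icc] at ht
        rw [(hasDerivAt_phi (hc0.trans ht.1)).deriv]
        have hlt := psi_lt_psi hc0 ht.1 (le_trans ht.2.le hs32)
        rw [psi_log2] at hlt
        linarith
      have := hB (Set.left_mem_Icc.mpr h.le) (Set.right_mem_Icc.mpr h.le) h.le
      rw [phi_log2] at this
      linarith
  · -- s > 3/2 : direct estimate
    have h1 : 0 < 1 - Real.exp (-s) := one_sub_exp_pos hs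
    have hE0 : 0 < Real.exp (-s) := Real.exp_pos _
    have hcsq : (0.48:ℝ) ≤ (Real.log 2)^2 := by nlinarith [Real.log_two_gt_d9]
    have hquart := exp_quartic hs.le
    -- s ≤ (log 2)^2 * (exp s - 1)
    have hE1 : s ≤ (Real.log 2)^2 * (Real.exp s - 1) := by
      have hp1 : s ≤ 0.48 * (s + s^2/2 + s^3/6 + s^4/24) := by nlinarith
      have hp2 : (0.48:ℝ) * (s + s^2/2 + s^3/6 + s^4/24) ≤ (Real.log 2)^2 * (Real.exp s - 1) := by
        apply mul_le_mul hcsq (by nlinarith) (by nlinarith) (by positivity)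
      linarith
    have hEinv : Real.exp (-s) * Real.exp s = 1 := by
      rw [← Real.exp_add]; simp
    have hsu : s * Real.exp (-s) ≤ (Real.log 2)^2 * (1 - Real.exp (-s)) := by
      have := mul_le_mul_of_nonneg_right hE1 hE0.le
      nlinarith [this, hEinv]
    have hlogy : -(Real.exp (-s) / (1 - Real.exp (-s))) ≤ Real.log (1 - Real.exp (-s)) := by
      have h2 := Real.log_le_sub_one_of_pos (inv_pos.mpr h1)
      rw [Real.log_inv] at h2
      have h3 : (1 - Real.exp (-s))⁻¹ - 1 = Real.exp (-s) / (1 - Real.exp (-s)) := by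
        field_simp
        ring
      linarith [h3 ▸ h2]
    have h4 : s * (-(Real.exp (-s) / (1 - Real.exp (-s)))) ≤ s * Real.log (1 - Real.exp (-s)) :=
      mul_le_mul_of_nonneg_left hlogy hs.le
    have h5 : s * Real.exp (-s) / (1 - Real.exp (-s)) ≤ (Real.log 2)^2 :=
      (div_le_iff₀ h1).mpr (by linarith)
    have h6 : s * (-(Real.exp (-s) / (1 - Real.exp (-s))))
        = -(s * Real.exp (-s) / (1 - Real.exp (-s))) := by ring
    show -(Real.log 2)^2 ≤ s * Real.log (1 - Real.exp (-s))
    linarith [h6 ▸ h4]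


set_option maxHeartbeats 1000000 in
/-- Lower bound on `𝓛_n = min_{x ∈ {2,…,n}} x·log(1 − (1 − λ/log n)^{x−1})`:
for every `ε > 0` and all sufficiently large `n`,
`𝓛_n ≥ −(1+ε)·((log 2)²/λ)·log n`. -/
theorem Lp_min_lower_bound (lam : ℝ) (hlam : 0 < lam) :
    ∀ ε : ℝ, 0 < ε → ∃ n0 : ℕ, ∀ n : ℕ, n0 ≤ n → ∀ hn : 2 ≤ n,
      -(1 + ε) * ((Real.log 2) ^ 2 / lam) * Real.log n ≤
        (Finset.Icc 2 n).inf' (Finset.nonempty_Icc.mpr hn)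
          (fun x : ℕ => (x : ℝ) * Real.log (1 - (1 - lam / Real.log n) ^ (x - 1))) := by
  intro ε hε
  have hc0 : 0 < Real.log 2 := Real.log_pos one_lt_two
  set X : ℝ := max 2 (1 + 1/ε) with hX
  have hX2 : (2:ℝ) ≤ X := le_max_left _ _
  have hX0 : (0:ℝ) < X := by linarith
  set C : ℝ := (1 + ε) * ((Real.log 2)^2 / lam) with hC
  have hC0 : 0 < C := by positivity
  set K : ℝ := 2 * X / (Real.sqrt lam * C) with hK
  set M : ℝ := max (lam + 1) (max 1 (K^2)) with hM
  have hlogtend : Filter.Tendsto (fun n : ℕ => Real.log n) Filter.atTop Filter.atTop :=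
    Real.tendsto_log_atTop.comp tendsto_natCast_atTop_atTop
  obtain ⟨n0, hn0⟩ := Filter.eventually_atTop.mp (hlogtend.eventually_ge_atTop M)
  refine ⟨n0, ?_⟩
  intro n hn hn2
  have hMn : M ≤ Real.log n := hn0 n hn
  set L : ℝ := Real.log n with hL
  have hL1 : 1 ≤ L := le_trans (le_trans (le_max_left 1 (K^2)) (le_max_right _ _)) hMn
  have hL0 : 0 < L := by linarith
  have hLlam : lam + 1 ≤ L := le_trans (le_max_left _ _) hMn
  set p : ℝ := lam / L with hp
  have hp0 : 0 < p := div_pos hlam hL0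
  have hp1 : p < 1 := (div_lt_one hL0).mpr (by linarith)
  -- the crucial size estimate for the "small x" case
  have hLlam0 : 0 < L / lam := div_pos hL0 hlam
  have hlogsq : Real.log (L/lam) ≤ 2 * Real.sqrt (L/lam) := by
    have h1 := Real.log_le_sub_one_of_pos (Real.sqrt_pos.mpr hLlam0)
    have h2 : Real.log (Real.sqrt (L/lam)) = Real.log (L/lam) / 2 := Real.log_sqrt hLlam0.le
    nlinarith [Real.sqrt_nonneg (L/lam)]
  have hsqL : K ≤ Real.sqrt L := by
    have hK2 : K^2 ≤ L := le_trans (le_trans (le_max_right 1 (K^2)) (le_max_right _ _)) hMn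
    have hK0 : 0 ≤ K := by positivity
    calc K = Real.sqrt (K^2) := (Real.sqrt_sq hK0).symm
      _ ≤ Real.sqrt L := Real.sqrt_le_sqrt hK2
  have hslam0 : 0 < Real.sqrt lam := Real.sqrt_pos.mpr hlam
  have h2X : 2 * X ≤ Real.sqrt L * (Real.sqrt lam * C) := by
    have := (div_le_iff₀ (by positivity)).mp hsqL
    linarith
  have hmulsq : Real.sqrt L * Real.sqrt L = L := Real.mul_self_sqrt hL0.le
  have hkey2 : X * Real.log (L/lam) ≤ C * L :=
    calc X * Real.log (L/lam) ≤ X * (2 * Real.sqrt (L/lam)) :=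
          mul_le_mul_of_nonneg_left hlogsq hX0.le
      _ = 2 * X * Real.sqrt L / Real.sqrt lam := by
          rw [Real.sqrt_div hL0.le]; ring
      _ ≤ C * L := by
          rw [div_le_iff₀ hslam0]
          have h9 : 2 * X * Real.sqrt L ≤ (Real.sqrt L * (Real.sqrt lam * C)) * Real.sqrt L :=
            mul_le_mul_of_nonneg_right h2X (Real.sqrt_nonneg L)
          have h10 : (Real.sqrt L * (Real.sqrt lam * C)) * Real.sqrt L
              = C * L * Real.sqrt lam := by
            calc (Real.sqrt L * (Real.sqrt lam * C)) * Real.sqrt L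
                = (Real.sqrt L * Real.sqrt L) * (Real.sqrt lam * C) := by ring
              _ = C * L * Real.sqrt lam := by rw [hmulsq]; ring
          linarith [h10 ▸ h9]
  apply Finset.le_inf'
  intro x hx
  obtain ⟨hx2, hxn⟩ := Finset.mem_Icc.mp hx
  have hxR : (2:ℝ) ≤ (x:ℝ) := by exact_mod_cast hx2
  have hmcast : ((x - 1 : ℕ) : ℝ) = (x:ℝ) - 1 := by
    rw [Nat.cast_sub (by omega : 1 ≤ x), Nat.cast_one]
  have hq0 : (0:ℝ) < 1 - p := by linarith
  have ht_le : (1 - p)^(x-1) ≤ 1 - p := pow_le_of_le_one hq0.le (by linarith) (by omega)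
  have h1t : p ≤ 1 - (1 - p)^(x-1) := by linarith
  have h1t0 : 0 < 1 - (1 - p)^(x-1) := by linarith
  rcases le_or_gt ((x:ℝ)) X with hcase | hcase
  · -- small x
    have hlog1 : Real.log p ≤ Real.log (1 - (1 - p)^(x-1)) := Real.log_le_log hp0 h1t
    have hxlog : (x:ℝ) * Real.log p ≤ (x:ℝ) * Real.log (1 - (1 - p)^(x-1)) :=
      mul_le_mul_of_nonneg_left hlog1 (by positivity)
    have hlogp : Real.log p = -Real.log (L/lam) := by
      rw [hp, ← Real.log_inv, inv_div]
    have hlp0 : Real.log p ≤ 0 := Real.log_nonpos hp0.le hp1.le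
    have hXx : X * Real.log p ≤ (x:ℝ) * Real.log p := by nlinarith
    have hfin : -(C * L) ≤ X * Real.log p := by
      rw [hlogp]; linarith [hkey2]
    have : -(1 + ε) * ((Real.log 2)^2 / lam) * L = -(C * L) := by rw [hC]; ring
    linarith
  · -- large x
    have hx1 : (1:ℝ) + 1/ε ≤ (x:ℝ) := le_trans (le_max_right _ _) hcase.le
    have hm0 : (0:ℝ) < (x:ℝ) - 1 := by linarith
    have hratio : (x:ℝ) ≤ (1 + ε) * ((x:ℝ) - 1) := by
      have h1 : 1 + ε ≤ ε * (x:ℝ) := by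
        have := mul_le_mul_of_nonneg_left hx1 hε.le
        rw [mul_add, mul_one_div, div_self hε.ne'] at this
        linarith
      nlinarith
    set s : ℝ := p * ((x:ℝ) - 1) with hs
    have hs0 : 0 < s := mul_pos hp0 hm0
    have hqe : 1 - p ≤ Real.exp (-p) := by linarith [Real.add_one_le_exp (-p)]
    have htexp : (1 - p)^(x-1) ≤ Real.exp (-s) := by
      calc (1 - p)^(x-1) ≤ (Real.exp (-p))^(x-1) := pow_le_pow_left₀ hq0.le hqe _
        _ = Real.exp ((x-1 : ℕ) * (-p)) := (Real.exp_nat_mul _ _).symm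
        _ = Real.exp (-s) := by rw [hmcast, hs]; ring_nf
    have hes1 : 0 < 1 - Real.exp (-s) := one_sub_exp_pos hs0
    have hloglog : Real.log (1 - Real.exp (-s)) ≤ Real.log (1 - (1 - p)^(x-1)) :=
      Real.log_le_log hes1 (by linarith)
    have hkeyK := key_ineq hs0
    have h5 : -((Real.log 2)^2) / s ≤ Real.log (1 - Real.exp (-s)) :=
      (div_le_iff₀ hs0).mpr (by linarith)
    have h6 : (x:ℝ) * (-((Real.log 2)^2) / s) ≤ (x:ℝ) * Real.log (1 - (1 - p)^(x-1)) :=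
      mul_le_mul_of_nonneg_left (le_trans h5 hloglog) (by positivity)
    have h8 : (x:ℝ) * ((Real.log 2)^2 / s) ≤ (1 + ε) * ((Real.log 2)^2 / lam) * L := by
      rw [mul_div_assoc', div_le_iff₀ hs0]
      have hseq : (1 + ε) * ((Real.log 2)^2 / lam) * L * s
          = ((1 + ε) * ((x:ℝ) - 1)) * (Real.log 2)^2 := by
        rw [hs, hp]
        field_simp [hlam.ne', hL0.ne']
      rw [hseq]
      nlinarith [hratio, sq_nonneg (Real.log 2)]
    have heq1 : (x:ℝ) * (-((Real.log 2)^2) / s) = -((x:ℝ) * ((Real.log 2)^2 / s)) := by ring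
    have heq2 : -(1 + ε) * ((Real.log 2)^2 / lam) * L
        = -((1 + ε) * ((Real.log 2)^2 / lam) * L) := by ring
    have h7 : -(1 + ε) * ((Real.log 2)^2 / lam) * L ≤ (x:ℝ) * (-((Real.log 2)^2) / s) := by
      rw [heq1, heq2]
      exact neg_le_neg h8
    linarith
end
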